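/- arXiv:1606.02329 — 6 statements merged into one kernel-verified Lean document; each statement's English description precedes it below -/
import Mathlib

section
/- Let H be a complex Hilbert space and U a unitary bounded operator on H. Suppose there exists δ > 0 such that every element z of the spectrum of U with z ≠ -1 satisfies ‖z + 1‖ ≥ δ (i.e. U has spectral gap at -1). Then for every x in the orthogonal complement of ker(U + 1) one has δ·‖x‖ ≤ ‖(U + 1) x‖. -/
/-!
Put `T = U + 1`. It is normal, and the gap says that `0` is an isolated point of `σ(T)` with
`‖z‖ ≥ δ` elsewhere. So `z ↦ z⁻¹` (Lean's `0⁻¹ = 0`) is continuous on `σ(T)`, and the continuous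
functional calculus provides `R = cfc (·⁻¹) T` with `‖R‖ ≤ δ⁻¹` and the orthogonal projection
`P = cfc (1 - z⁻¹ z) T = 1 - R T`, the spectral projection of `{0}`. As `T P = 0`, the range of `P`
lies in `ker T`, so `P x = 0` for `x ⊥ ker T`, whence `x = R (T x)` and `‖x‖ ≤ δ⁻¹ ‖T x‖`.
-/

lemma continuousOn_inv₀_of_le_norm {𝕜 : Type*} [NormedDivisionRing 𝕜] {s : Set 𝕜} {δ : ℝ}
    (hδ : 0 < δ) (hs : ∀ z ∈ s, z ≠ 0 → δ ≤ ‖z‖) : ContinuousOn Inv.inv s := by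
  have hsub : s ⊆ {0} ∪ {z | δ ≤ ‖z‖} := fun z hz ↦ by
    by_cases h : z = 0
    · exact .inl h
    · exact .inr (hs z hz h)
  have hfar : ContinuousOn Inv.inv {z : 𝕜 | δ ≤ ‖z‖} :=
    continuousOn_inv₀.mono fun z (hz : δ ≤ ‖z‖) ↦ norm_pos_iff.mp (hδ.trans_le hz)
  exact ((continuousOn_singleton _ _).union_of_isClosed hfar isClosed_singleton
    (isClosed_le continuous_const continuous_norm)).mono hsub

section CStarAlgebra

variable {A : Type*} [CStarAlgebra A] {a : A}

lemma norm_cfc_inv_le {δ : ℝ} (hδ : 0 < δ) (hgap : ∀ z ∈ spectrum ℂ a, z ≠ 0 → δ ≤ ‖z‖) :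
    ‖cfc (·⁻¹ : ℂ → ℂ) a‖ ≤ δ⁻¹ := by
  refine norm_cfc_le (inv_nonneg.mpr hδ.le) fun z hz ↦ ?_
  rcases eq_or_ne z 0 with rfl | hz₀
  · simpa using inv_nonneg.mpr hδ.le
  · simpa only [norm_inv] using inv_anti₀ hδ (hgap z hz hz₀)

variable [IsStarNormal a] (hinv : ContinuousOn (·⁻¹ : ℂ → ℂ) (spectrum ℂ a))
include hinv

lemma isStarProjection_cfc_one_sub_inv_mul :
    IsStarProjection (cfc (fun z : ℂ ↦ 1 - z⁻¹ * z) a) := by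
  refine isStarProjection_iff_spectrum_subset_and_isStarNormal.mpr ⟨?_, cfc_predicate _ a⟩
  rw [cfc_map_spectrum _ a]
  rintro _ ⟨z, -, rfl⟩
  rcases eq_or_ne z 0 with rfl | hz₀ <;> simp [*]

lemma mul_cfc_one_sub_inv_mul : a * cfc (fun z : ℂ ↦ 1 - z⁻¹ * z) a = 0 := by
  calc a * cfc (fun z : ℂ ↦ 1 - z⁻¹ * z) a
      = cfc (fun z : ℂ ↦ z * (1 - z⁻¹ * z)) a := by rw [cfc_mul _ _ a, cfc_id' ℂ a]
    _ = 0 := by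
      refine (cfc_congr fun z _ ↦ ?_).trans (cfc_zero ℂ a)
      rcases eq_or_ne z 0 with rfl | hz₀ <;> simp [*]

lemma cfc_one_sub_inv_mul_add_cfc_inv_mul :
    cfc (fun z : ℂ ↦ 1 - z⁻¹ * z) a + cfc (·⁻¹ : ℂ → ℂ) a * a = 1 := by
  calc cfc (fun z : ℂ ↦ 1 - z⁻¹ * z) a + cfc (·⁻¹ : ℂ → ℂ) a * a
      = cfc (fun z : ℂ ↦ 1 - z⁻¹ * z) a + cfc (fun z : ℂ ↦ z⁻¹ * z) a := by
        rw [cfc_mul _ _ a, cfc_id' ℂ a]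
    _ = 1 := by
        rw [← cfc_add .., cfc_congr fun z _ ↦ sub_add_cancel 1 (z⁻¹ * z), cfc_const_one ℂ a]

end CStarAlgebra

lemma IsStarProjection.apply_eq_zero_of_mem_orthogonal_ker {𝕜 E : Type*} [RCLike 𝕜]
    [NormedAddCommGroup E] [InnerProductSpace 𝕜 E] [CompleteSpace E] {p T : E →L[𝕜] E}
    (hp : IsStarProjection p) (hTp : T * p = 0) {x : E}
    (hx : x ∈ (LinearMap.ker (T : E →ₗ[𝕜] E))ᗮ) : p x = 0 := by
  obtain ⟨K, _, rfl⟩ := isStarProjection_iff_eq_starProjection.mp hp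
  have hK : K ≤ LinearMap.ker (T : E →ₗ[𝕜] E) := fun k hk ↦ by
    have hTk : T (K.starProjection k) = 0 := congr($hTp k)
    rwa [Submodule.starProjection_eq_self_iff.mpr hk] at hTk
  exact K.starProjection_apply_eq_zero_iff.mpr (Submodule.orthogonal_le hK hx)

lemma IsStarNormal.mul_norm_le_norm_apply_of_mem_orthogonal_ker {H : Type*}
    [NormedAddCommGroup H] [InnerProductSpace ℂ H] [CompleteSpace H] {T : H →L[ℂ] H}
    [IsStarNormal T] {δ : ℝ} (hδ : 0 < δ) (hgap : ∀ z ∈ spectrum ℂ T, z ≠ 0 → δ ≤ ‖z‖) {x : H}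
    (hx : x ∈ (LinearMap.ker (T : H →ₗ[ℂ] H))ᗮ) : δ * ‖x‖ ≤ ‖T x‖ := by
  have hinv := continuousOn_inv₀_of_le_norm hδ hgap
  have hpx : cfc (fun z : ℂ ↦ 1 - z⁻¹ * z) T x = 0 :=
    (isStarProjection_cfc_one_sub_inv_mul hinv).apply_eq_zero_of_mem_orthogonal_ker
      (mul_cfc_one_sub_inv_mul hinv) hx
  have hx_eq : cfc (·⁻¹ : ℂ → ℂ) T (T x) = x := by
    simpa [hpx] using congr($(cfc_one_sub_inv_mul_add_cfc_inv_mul hinv) x)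
  rw [← le_inv_mul_iff₀ hδ]
  calc ‖x‖ = ‖cfc (·⁻¹ : ℂ → ℂ) T (T x)‖ := by rw [hx_eq]
    _ ≤ ‖cfc (·⁻¹ : ℂ → ℂ) T‖ * ‖T x‖ := ContinuousLinearMap.le_opNorm _ _
    _ ≤ δ⁻¹ * ‖T x‖ := by gcongr; exact norm_cfc_inv_le hδ hgap

/-- Let `H` be a complex Hilbert space and `U` a unitary bounded operator on `H` with
spectral gap at `-1`: there is `δ > 0` with `δ ≤ ‖z + 1‖` for every spectral value
`z ≠ -1` of `U`. Then `δ * ‖x‖ ≤ ‖(U + 1) x‖` for every `x` in `(ker (U + 1))ᗮ`. -/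
theorem norm_add_one_apply_ge_of_spectral_gap
    {H : Type*} [NormedAddCommGroup H] [InnerProductSpace ℂ H] [CompleteSpace H]
    (U : H →L[ℂ] H)
    (hU₁ : ContinuousLinearMap.adjoint U ∘L U = 1)
    (hU₂ : U ∘L ContinuousLinearMap.adjoint U = 1)
    (δ : ℝ) (hδ : 0 < δ)
    (hgap : ∀ z ∈ spectrum ℂ U, z ≠ -1 → δ ≤ ‖z + 1‖) :
    ∀ x ∈ (LinearMap.ker ((U + 1 : H →L[ℂ] H) : H →ₗ[ℂ] H))ᗮ, δ * ‖x‖ ≤ ‖(U + 1) x‖ := by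
  have : IsStarNormal U := isStarNormal_of_mem_unitary (Unitary.mem_iff.mpr ⟨hU₁, hU₂⟩)
  have : IsStarNormal (U + 1) := add_comm 1 U ▸ inferInstance
  refine fun x hx ↦ IsStarNormal.mul_norm_le_norm_apply_of_mem_orthogonal_ker hδ
    (fun z hz hz₀ ↦ ?_) hx
  rw [← map_one (algebraMap ℂ (H →L[ℂ] H)), ← spectrum.add_singleton_eq, Set.add_singleton] at hz
  obtain ⟨w, hw, rfl⟩ := hz
  exact hgap w hw fun h ↦ hz₀ (by simp [h])
end

section
/- Let H be a complex Hilbert space and U a unitary bounded operator on H with spectral gap at -1, i.e. there exists δ > 0 such that every element z of the spectrum of U with z ≠ -1 satisfies ‖z + 1‖ ≥ δ. Let P be the orthogonal projection of H onto ker(U + 1). Then there exists a unique bounded linear operator B on H satisfying B ∘ P = 0, (U + 1) ∘ B = id - P, and B ∘ (U + 1) = id - P. -/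
/-!
With the convention `0⁻¹ = 0`, the spectral gap makes `z ↦ z⁻¹` continuous on the spectrum of
the normal operator `T = U + 1`, so `B = cfc (·⁻¹) T` is defined and satisfies `T B T = T`,
`B T B = B` and `T B = B T`. For a normal operator `range T ⟂ ker T`, so `1 - T B` is the orthogonal
projection `P` onto `ker T`, and the three identities follow. Uniqueness is ring algebra: any `C`
with `C P = 0` and `C T = 1 - P` equals `C T B = (1 - P) B = B`.
-/

open ContinuousLinearMap

theorem continuousOn_inv_of_forall_le_norm {𝕜 : Type*} [NormedDivisionRing 𝕜] {s : Set 𝕜}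
    {δ : ℝ} (hδ : 0 < δ) (hs : ∀ z ∈ s, z ≠ 0 → δ ≤ ‖z‖) : ContinuousOn (·⁻¹) s := by
  intro z hz
  rcases eq_or_ne z 0 with rfl | hz₀
  · refine continuousWithinAt_of_not_accPt fun hacc ↦ ?_
    obtain ⟨y, ⟨hyδ, hys⟩, hy₀⟩ := accPt_iff_nhds.mp hacc _ (Metric.ball_mem_nhds 0 hδ)
    exact (hs y hys hy₀).not_gt (mem_ball_zero_iff.mp hyδ)
  · exact (continuousAt_inv₀ hz₀).continuousWithinAt

structure IsGroupInverse {R : Type*} [Ring R] (a b : R) : Prop where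
  mul_inv_mul : a * b * a = a
  inv_mul_inv : b * a * b = b
  commute : Commute a b

namespace IsGroupInverse

variable {R : Type*} [Ring R] {a b p : R}

theorem existsUnique (h : IsGroupInverse a b) (hp : p = 1 - a * b) :
    ∃! c, c * p = 0 ∧ a * c = 1 - p ∧ c * a = 1 - p := by
  subst hp
  refine ⟨b, ⟨?_, (sub_sub_cancel _ _).symm, ?_⟩, ?_⟩
  · rw [mul_sub, mul_one, ← mul_assoc, h.inv_mul_inv, sub_self]
  · rw [sub_sub_cancel, h.commute.eq]
  rintro c ⟨hcp, -, hca⟩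
  rw [mul_sub, mul_one, sub_eq_zero] at hcp
  calc c = c * a * b := by rw [mul_assoc, ← hcp]
    _ = a * b * b := by rw [hca, sub_sub_cancel]
    _ = b := by rw [h.commute.eq, h.inv_mul_inv]

end IsGroupInverse

section CFC

variable {R A : Type*} {p : A → Prop} [Field R] [StarRing R] [MetricSpace R]
  [IsTopologicalSemiring R] [ContinuousStar R] [TopologicalSpace A] [Ring A] [StarRing A]
  [Algebra R A] [ContinuousFunctionalCalculus R A p]

/-- Continuity of `·⁻¹` on the spectrum means that `0` is at most an isolated point of it. -/
theorem isGroupInverse_cfc_inv {a : A} (hinv : ContinuousOn (·⁻¹) (spectrum R a))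
    (ha : p a := by cfc_tac) : IsGroupInverse a (cfc (·⁻¹ : R → R) a) := by
  have hid : ContinuousOn (fun x : R ↦ x) (spectrum R a) := continuousOn_id
  have hmul : ContinuousOn (fun x : R ↦ x * x⁻¹) (spectrum R a) := hid.mul hinv
  have hmul' : ContinuousOn (fun x : R ↦ x⁻¹ * x) (spectrum R a) := hinv.mul hid
  refine ⟨?_, ?_, ?_⟩
  · have h : cfc (fun x : R ↦ x * x⁻¹ * x) a = a := by
      simp_rw [mul_inv_mul_cancel]
      exact cfc_id' R a
    rwa [cfc_mul _ _ a hmul hid, cfc_mul _ _ a hid hinv, cfc_id' R a] at h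
  · have h : cfc (fun x : R ↦ x⁻¹ * x * x⁻¹) a = cfc (·⁻¹ : R → R) a := by
      congr 1 with x
      simpa only [inv_inv] using mul_inv_mul_cancel x⁻¹
    rwa [cfc_mul _ _ a hmul' hinv, cfc_mul _ _ a hinv hid, cfc_id' R a] at h
  · simpa only [cfc_id' R a] using cfc_commute_cfc (fun x : R ↦ x) (·⁻¹ : R → R) a

end CFC

theorem IsGroupInverse.starProjection_ker_eq_one_sub_mul {𝕜 H : Type*} [RCLike 𝕜]
    [NormedAddCommGroup H] [InnerProductSpace 𝕜 H] [CompleteSpace H] {T S : H →L[𝕜] H}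
    (h : IsGroupInverse T S) (hT : IsStarNormal T) :
    (T : H →ₗ[𝕜] H).ker.starProjection = 1 - T * S := by
  ext x
  refine Submodule.eq_starProjection_of_mem_orthogonal ?_ ?_
  · change (T * (1 - T * S)) x = 0
    rw [h.commute.eq, mul_sub, mul_one, ← mul_assoc, h.mul_inv_mul, sub_self, zero_apply]
  · rw [← hT.orthogonal_range]
    refine Submodule.le_orthogonal_orthogonal _ ⟨S x, ?_⟩
    simp

/-- Let `H` be a complex Hilbert space and `U` a unitary bounded operator on `H` with
spectral gap at `-1`. Let `P` be the orthogonal projection onto `ker (U + 1)`.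
Then there is a unique bounded operator `B` with `B ∘ P = 0`,
`(U + 1) ∘ B = 1 - P` and `B ∘ (U + 1) = 1 - P`. -/
theorem existsUnique_pseudoinverse_of_spectral_gap
    {H : Type*} [NormedAddCommGroup H] [InnerProductSpace ℂ H] [CompleteSpace H]
    (U P : H →L[ℂ] H)
    (hU₁ : ContinuousLinearMap.adjoint U ∘L U = 1)
    (hU₂ : U ∘L ContinuousLinearMap.adjoint U = 1)
    (δ : ℝ) (hδ : 0 < δ)
    (hgap : ∀ z ∈ spectrum ℂ U, z ≠ -1 → δ ≤ ‖z + 1‖)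
    (hP : ∀ x : H, P x ∈ LinearMap.ker ((U + 1 : H →L[ℂ] H) : H →ₗ[ℂ] H) ∧ x - P x ∈ (LinearMap.ker ((U + 1 : H →L[ℂ] H) : H →ₗ[ℂ] H))ᗮ) :
    ∃! B : H →L[ℂ] H,
      B ∘L P = 0 ∧ (U + 1) ∘L B = 1 - P ∧ B ∘L (U + 1) = 1 - P := by
  have hU : IsStarNormal U := ⟨by rw [commute_iff_eq, star_eq_adjoint, mul_def, mul_def, hU₁, hU₂]⟩
  have hT : IsStarNormal (U + 1) :=
    Commute.isStarNormal_add (by rw [star_one]; exact Commute.one_right U)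
  have hgapT : ∀ z ∈ spectrum ℂ (U + 1), z ≠ 0 → δ ≤ ‖z‖ := by
    intro z hz hz₀
    rw [← sub_add_cancel z 1, add_comm U, ← map_one (algebraMap ℂ (H →L[ℂ] H)),
      spectrum.add_mem_add_iff] at hz
    simpa using hgap _ hz (by simpa [sub_eq_iff_eq_add] using hz₀)
  have hB := isGroupInverse_cfc_inv (continuousOn_inv_of_forall_le_norm hδ hgapT)
  have hPB : P = 1 - (U + 1) * cfc (·⁻¹ : ℂ → ℂ) (U + 1) := by
    rw [← hB.starProjection_ker_eq_one_sub_mul hT]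
    ext x
    exact (Submodule.eq_starProjection_of_mem_orthogonal (hP x).1 (hP x).2).symm
  simpa only [mul_def] using hB.existsUnique hPB
end

section
/- Let H be a complex Hilbert space, U a unitary bounded operator on H, P the orthogonal projection of H onto ker(U + 1), and B a bounded linear operator on H satisfying B ∘ P = 0, (U + 1) ∘ B = id - P, and B ∘ (U + 1) = id - P. Then the partial Cayley transform A := i · ((U - 1) ∘ B) is a self-adjoint bounded operator on H, i.e. A⋆ = A. -/
/-!
Write `T = U + 1`. Once `B + B⋆ = 1 - P` is known, `(U - 1) B = T B - 2 B = B⋆ - B` is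
skew-adjoint, and `i` times a skew-adjoint element is self-adjoint.

The identity `B + B⋆ = 1 - P` is star-ring algebra. From `U U⋆ = 1` we get
`T B⋆ = U (B T)⋆ = U (1 - P) = U + P`, so `D = B + B⋆ - (1 - P)` satisfies `T D = 0`, hence
`(1 - P) D = B T D = 0`. As `D` is self-adjoint, `D = (P D)⋆ = D P = B⋆ P`, and finally
`D = P B⋆ P = (B P)⋆ P = 0`.
-/

theorem add_star_eq_one_sub_of_pseudoInverse {R : Type*} [Ring R] [StarRing R] {U P B : R}
    (hU : U * star U = 1) (hP : IsSelfAdjoint P) (hUP : (U + 1) * P = 0)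
    (hB₀ : B * P = 0) (hB₁ : (U + 1) * B = 1 - P) (hB₂ : B * (U + 1) = 1 - P) :
    B + star B = 1 - P := by
  have hPP : (1 - P) * P = 0 := by rw [← hB₂, mul_assoc, hUP, mul_zero]
  have hUP' : U * P = -P := eq_neg_of_add_eq_zero_left (by rwa [add_mul, one_mul] at hUP)
  have hUB : (U + 1) * star B = U + P := calc
    (U + 1) * star B = U * star (B * (U + 1)) := by
      rw [star_mul, star_add, star_one, ← mul_assoc, mul_add, hU, mul_one, add_comm]
    _ = U + P := by
      rw [hB₂, star_sub, star_one, hP.star_eq, mul_sub, mul_one, hUP', sub_neg_eq_add]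
  set D := B + star B - (1 - P) with hD
  have hUD : (U + 1) * D = 0 := by
    rw [hD, mul_sub, mul_add, hB₁, hUB, mul_sub, mul_one, hUP]; abel
  have hPD : P * D = D := by
    have : (1 - P) * D = 0 := by rw [← hB₂, mul_assoc, hUD, mul_zero]
    rwa [sub_mul, one_mul, sub_eq_zero, eq_comm] at this
  have hDsa : star D = D := by
    rw [hD, star_sub, star_add, star_star, star_sub, star_one, hP.star_eq]; abel
  have hPB : P * star B = 0 := by rw [← hP.star_eq, ← star_mul, hB₀, star_zero]
  have hDP : D = star B * P := calc
    D = star (P * D) := by rw [hPD, hDsa]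
    _ = D * P := by rw [star_mul, hDsa, hP.star_eq]
    _ = star B * P := by rw [hD, sub_mul, add_mul, hB₀, hPP, zero_add, sub_zero]
  have hD0 : D = 0 := by rw [← hPD, hDP, ← mul_assoc, hPB, zero_mul]
  rwa [hD, sub_eq_zero] at hD0

theorem isSelfAdjoint_I_smul_sub_one_mul {R : Type*} [Ring R] [StarRing R] [Module ℂ R]
    [StarModule ℂ R] {U P B : R} (hB₁ : (U + 1) * B = 1 - P) (hB : B + star B = 1 - P) :
    IsSelfAdjoint (Complex.I • ((U - 1) * B)) := by
  have hskew : (U - 1) * B = star B - B := by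
    have : (U - 1) * B = (U + 1) * B - B - B := by noncomm_ring
    rw [this, hB₁, ← hB]; abel
  rw [hskew]
  refine IsSelfAdjoint.I_smul_of_mem_skewAdjoint ?_
  rw [skewAdjoint.mem_iff, star_sub, star_star, neg_sub]

theorem Submodule.starProjection_eq_of_forall_mem_of_sub_mem_orthogonal {𝕜 E : Type*}
    [RCLike 𝕜] [NormedAddCommGroup E] [InnerProductSpace 𝕜 E] {K : Submodule 𝕜 E}
    [K.HasOrthogonalProjection] {P : E →L[𝕜] E} (hP : ∀ x, P x ∈ K ∧ x - P x ∈ Kᗮ) :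
    K.starProjection = P :=
  ContinuousLinearMap.ext fun x => eq_starProjection_of_mem_orthogonal (hP x).1 (hP x).2

theorem partialCayleyTransform_isSelfAdjoint_general
    {H : Type*} [NormedAddCommGroup H] [InnerProductSpace ℂ H] [CompleteSpace H]
    (U P B : H →L[ℂ] H)
    (hU₂ : U ∘L ContinuousLinearMap.adjoint U = 1)
    (hP : ∀ x : H, P x ∈ LinearMap.ker ((U + 1 : H →L[ℂ] H) : H →ₗ[ℂ] H) ∧ x - P x ∈ (LinearMap.ker ((U + 1 : H →L[ℂ] H) : H →ₗ[ℂ] H))ᗮ)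
    (hB₀ : B ∘L P = 0) (hB₁ : (U + 1) ∘L B = 1 - P) (hB₂ : B ∘L (U + 1) = 1 - P) :
    ContinuousLinearMap.adjoint (Complex.I • ((U - 1) ∘L B)) =
      Complex.I • ((U - 1) ∘L B) := by
  have hPsa : IsSelfAdjoint P :=
    Submodule.starProjection_eq_of_forall_mem_of_sub_mem_orthogonal hP ▸
      isSelfAdjoint_starProjection _
  have hUP : (U + 1) * P = 0 := ContinuousLinearMap.ext fun x => (hP x).1
  have hB := add_star_eq_one_sub_of_pseudoInverse hU₂ hPsa hUP hB₀ hB₁ hB₂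
  rw [← ContinuousLinearMap.star_eq_adjoint]
  exact (isSelfAdjoint_I_smul_sub_one_mul hB₁ hB).star_eq

/-- Let `H` be a complex Hilbert space, `U` a unitary bounded operator on `H`, `P` the
orthogonal projection onto `ker (U + 1)`, and `B` a bounded operator with `B ∘ P = 0`,
`(U + 1) ∘ B = 1 - P` and `B ∘ (U + 1) = 1 - P`. Then the partial Cayley transform
`A := i • ((U - 1) ∘ B)` is self-adjoint. -/
theorem partialCayleyTransform_isSelfAdjoint
    {H : Type*} [NormedAddCommGroup H] [InnerProductSpace ℂ H] [CompleteSpace H]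
    (U P B : H →L[ℂ] H)
    (hU₁ : ContinuousLinearMap.adjoint U ∘L U = 1)
    (hU₂ : U ∘L ContinuousLinearMap.adjoint U = 1)
    (hP : ∀ x : H, P x ∈ LinearMap.ker ((U + 1 : H →L[ℂ] H) : H →ₗ[ℂ] H) ∧ x - P x ∈ (LinearMap.ker ((U + 1 : H →L[ℂ] H) : H →ₗ[ℂ] H))ᗮ)
    (hB₀ : B ∘L P = 0) (hB₁ : (U + 1) ∘L B = 1 - P) (hB₂ : B ∘L (U + 1) = 1 - P) :
    ContinuousLinearMap.adjoint (Complex.I • ((U - 1) ∘L B)) =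
      Complex.I • ((U - 1) ∘L B) :=
  partialCayleyTransform_isSelfAdjoint_general U P B hU₂ hP hB₀ hB₁ hB₂
end

section
/- Let H be a complex Hilbert space, U a unitary bounded operator on H, P the orthogonal projection of H onto ker(U + 1), and B a bounded linear operator on H satisfying B ∘ P = 0, (U + 1) ∘ B = id - P, and B ∘ (U + 1) = id - P. Set A := i · ((U - 1) ∘ B). Then for all φ, η ∈ H, the boundary-condition equation φ - i·η = U(φ + i·η) holds if and only if P φ = 0 and η - P η = A φ. -/
/-! With `ψ = φ + i η` the boundary condition reads `(U + 1) ψ = 2 φ`. For unitary `U`,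
`ker (U + 1) = ker (U* + 1)`, so the range of `U + 1` is orthogonal to its kernel and the
condition forces `P φ = 0`. Applying `B` gives `(1 - P) ψ = 2 B φ`, which is the natural part;
conversely `(U + 1)(U - 1) B = (U - 1)(1 - P)` recovers `(U + 1) η` from the natural part. -/

open scoped InnerProductSpace

section

open ContinuousLinearMap

variable {𝕜 H : Type*} [RCLike 𝕜] [NormedAddCommGroup H] [InnerProductSpace 𝕜 H]

theorem apply_eq_zero_of_mem_orthogonal {K : Submodule 𝕜 H} {P : H → H}
    (hP : ∀ x, P x ∈ K ∧ x - P x ∈ Kᗮ) {x : H} (hx : x ∈ Kᗮ) : P x = 0 := by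
  have hPx : P x ∈ Kᗮ := by simpa using Kᗮ.sub_mem hx (hP x).2
  simpa [K.inf_orthogonal_eq_bot] using Submodule.mem_inf.mpr ⟨(hP x).1, hPx⟩

theorem add_one_apply_mem_orthogonal_ker [CompleteSpace H] {U : H →L[𝕜] H}
    (hU : adjoint U ∘L U = 1) (x : H) :
    (U + 1) x ∈ (LinearMap.ker ((U + 1 : H →L[𝕜] H) : H →ₗ[𝕜] H))ᗮ := by
  intro k hk
  have hUk : U k + k = 0 := by simpa using hk
  have hUUk : adjoint U (U k) = k := by simpa using congrArg (· k) hU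
  have hadj : adjoint U k + k = 0 := by
    simpa [hUUk, add_comm] using congrArg (adjoint U) hUk
  calc ⟪k, (U + 1) x⟫_𝕜 = ⟪adjoint U k + k, x⟫_𝕜 := by
        rw [inner_add_left, adjoint_inner_left, add_apply, one_apply_eq_self, inner_add_right]
    _ = 0 := by rw [hadj, inner_zero_left]

end

section

variable {H : Type*} [NormedAddCommGroup H] [NormedSpace ℂ H]

def partialCayley (U B : H →L[ℂ] H) : H →L[ℂ] H :=
  Complex.I • ((U - 1) ∘L B)

theorem sub_I_smul_eq_apply_add_I_smul_iff (U : H →L[ℂ] H) (φ η : H) :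
    φ - Complex.I • η = U (φ + Complex.I • η) ↔
      (U + 1) (φ + Complex.I • η) = (2 : ℂ) • φ := by
  rw [add_apply, one_apply_eq_self]
  constructor <;> intro h <;> linear_combination (norm := module) -h

theorem sub_apply_eq_partialCayley_apply {U P B : H →L[ℂ] H}
    (hB₁ : (U + 1) ∘L B = 1 - P) (hB₂ : B ∘L (U + 1) = 1 - P) {φ η : H}
    (h : (U + 1) (φ + Complex.I • η) = (2 : ℂ) • φ) :
    η - P η = partialCayley U B φ := by
  have h2B : (2 : ℂ) • B φ = (φ + Complex.I • η) - P (φ + Complex.I • η) := by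
    rw [← map_smul, ← h, ← ContinuousLinearMap.comp_apply, hB₂]
    rfl
  have hUB : U (B φ) + B φ = φ - P φ := by simpa using congrArg (· φ) hB₁
  show η - P η = Complex.I • (U (B φ) - B φ)
  simp only [map_add, map_smul] at h2B
  linear_combination (norm := skip) Complex.I • h2B - Complex.I • hUB
  match_scalars <;> ring_nf <;> simp

theorem add_one_apply_eq_two_smul_of_partialCayley {U P B : H →L[ℂ] H}
    (hPU : (U + 1) ∘L P = 0) (hB₁ : (U + 1) ∘L B = 1 - P) {φ η : H} (hPφ : P φ = 0)
    (hη : η - P η = partialCayley U B φ) :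
    (U + 1) (φ + Complex.I • η) = (2 : ℂ) • φ := by
  have hcomm : (U + 1) ∘L (U - 1) = (U - 1) ∘L (U + 1) := by
    ext x
    simp only [ContinuousLinearMap.comp_apply, add_apply, sub_apply,
      one_apply_eq_self, map_add, map_sub]
    abel
  have hUB : (U + 1) (B φ) = φ := by simpa [hPφ] using congrArg (· φ) hB₁
  have hUη : (U + 1) η = Complex.I • (U - 1) φ :=
    calc (U + 1) η = (U + 1) (η - P η) := by
          rw [map_sub, ← ContinuousLinearMap.comp_apply, hPU, zero_apply, sub_zero]
      _ = Complex.I • ((U + 1) ∘L (U - 1)) (B φ) := by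
          rw [hη, partialCayley, smul_apply, map_smul]; rfl
      _ = Complex.I • (U - 1) φ := by
          rw [hcomm, ContinuousLinearMap.comp_apply, hUB]
  rw [map_add, map_smul, hUη, smul_smul, Complex.I_mul_I]
  simp only [add_apply, sub_apply, one_apply_eq_self]
  module

end

theorem boundaryCondition_iff_essential_and_natural_general
    {H : Type*} [NormedAddCommGroup H] [InnerProductSpace ℂ H] [CompleteSpace H]
    (U P B : H →L[ℂ] H)
    (hU₁ : ContinuousLinearMap.adjoint U ∘L U = 1)
    (hP : ∀ x : H, P x ∈ LinearMap.ker ((U + 1 : H →L[ℂ] H) : H →ₗ[ℂ] H) ∧ x - P x ∈ (LinearMap.ker ((U + 1 : H →L[ℂ] H) : H →ₗ[ℂ] H))ᗮ)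
    (hB₁ : (U + 1) ∘L B = 1 - P) (hB₂ : B ∘L (U + 1) = 1 - P) :
    ∀ φ η : H,
      φ - Complex.I • η = U (φ + Complex.I • η) ↔
        (P φ = 0 ∧ η - P η = (Complex.I • ((U - 1) ∘L B)) φ) := by
  intro φ η
  rw [sub_I_smul_eq_apply_add_I_smul_iff]
  constructor
  · intro h
    have hφ : φ ∈ (LinearMap.ker ((U + 1 : H →L[ℂ] H) : H →ₗ[ℂ] H))ᗮ := by
      have := add_one_apply_mem_orthogonal_ker hU₁ (φ + Complex.I • η)
      rwa [h, Submodule.smul_mem_iff _ two_ne_zero] at this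
    exact ⟨apply_eq_zero_of_mem_orthogonal hP hφ, sub_apply_eq_partialCayley_apply hB₁ hB₂ h⟩
  · rintro ⟨hPφ, hη⟩
    have hPU : (U + 1) ∘L P = 0 := by
      ext x
      exact (hP x).1
    exact add_one_apply_eq_two_smul_of_partialCayley hPU hB₁ hPφ hη

/-- Splitting of the boundary condition `φ - i·η = U (φ + i·η)` into the essential part
`P φ = 0` and the natural part `η - P η = A φ`, where `P` is the orthogonal projection
onto `ker (U + 1)`, `B` is the pseudo-inverse of `U + 1`, and `A = i • ((U - 1) ∘ B)`
is the partial Cayley transform. -/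
theorem boundaryCondition_iff_essential_and_natural
    {H : Type*} [NormedAddCommGroup H] [InnerProductSpace ℂ H] [CompleteSpace H]
    (U P B : H →L[ℂ] H)
    (hU₁ : ContinuousLinearMap.adjoint U ∘L U = 1)
    (hU₂ : U ∘L ContinuousLinearMap.adjoint U = 1)
    (hP : ∀ x : H, P x ∈ LinearMap.ker ((U + 1 : H →L[ℂ] H) : H →ₗ[ℂ] H) ∧ x - P x ∈ (LinearMap.ker ((U + 1 : H →L[ℂ] H) : H →ₗ[ℂ] H))ᗮ)
    (hB₀ : B ∘L P = 0) (hB₁ : (U + 1) ∘L B = 1 - P) (hB₂ : B ∘L (U + 1) = 1 - P) :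
    ∀ φ η : H,
      φ - Complex.I • η = U (φ + Complex.I • η) ↔
        (P φ = 0 ∧ η - P η = (Complex.I • ((U - 1) ∘L B)) φ) :=
  boundaryCondition_iff_essential_and_natural_general U P B hU₁ hP hB₁ hB₂
end

section
/- Let V be a vector space over ℂ and let α be a real number with -π < α < π. Then for all φ, η ∈ V, the equation φ - i·η = e^{iα}·(φ + i·η) holds if and only if η = -tan(α/2)·φ (scalar multiplication by the real number -tan(α/2)). -/
/-- For `-π < α < π` and vectors `φ, η` in a complex vector space, the boundary
condition `φ - i·η = e^{iα}·(φ + i·η)` is equivalent to the Robin condition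
`η = -tan(α/2)·φ`. -/
theorem robin_boundary_condition_iff
    {V : Type*} [AddCommGroup V] [Module ℂ V]
    (α : ℝ) (hα₁ : -Real.pi < α) (hα₂ : α < Real.pi) :
    ∀ φ η : V,
      φ - Complex.I • η = Complex.exp (Complex.I * α) • (φ + Complex.I • η) ↔
        η = ((-Real.tan (α / 2) : ℝ) : ℂ) • φ := by
  intro φ η
  set e := Complex.exp (Complex.I * α) with he
  have hc : Real.cos (α / 2) ≠ 0 :=
    ne_of_gt (Real.cos_pos_of_mem_Ioo ⟨by linarith, by linarith⟩)
  have hsin : Real.sin α = 2 * Real.sin (α / 2) * Real.cos (α / 2) := by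
    have := Real.sin_two_mul (α / 2)
    rwa [show 2 * (α / 2) = α by ring] at this
  have hcos : Real.cos α = Real.cos (α / 2) ^ 2 - Real.sin (α / 2) ^ 2 := by
    have := Real.cos_two_mul' (α / 2)
    rwa [show 2 * (α / 2) = α by ring] at this
  have hpyth : Real.sin (α / 2) ^ 2 + Real.cos (α / 2) ^ 2 = 1 :=
    Real.sin_sq_add_cos_sq _
  set S : ℂ := (Real.sin (α / 2) : ℂ) with hS
  set C : ℂ := (Real.cos (α / 2) : ℂ) with hC
  have hc' : C ≠ 0 := by
    rw [hC]; exact Complex.ofReal_ne_zero.mpr hc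
  have hpyth' : S ^ 2 + C ^ 2 = 1 := by
    rw [hS, hC]; exact_mod_cast hpyth
  have he' : e = (C ^ 2 - S ^ 2) + 2 * S * C * Complex.I := by
    rw [he, mul_comm Complex.I (α : ℂ), Complex.exp_mul_I, ← Complex.ofReal_cos,
      ← Complex.ofReal_sin, hsin, hcos, hS, hC]
    push_cast [-Complex.ofReal_cos, -Complex.ofReal_sin]
    ring
  have htan : ((Real.tan (α / 2) : ℝ) : ℂ) = S / C := by
    rw [Real.tan_eq_sin_div_cos, hS, hC]
    push_cast [-Complex.ofReal_cos, -Complex.ofReal_sin]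
    ring
  have key : (1 : ℂ) - e = ((-Real.tan (α / 2) : ℝ) : ℂ) * ((1 + e) * Complex.I) := by
    rw [show ((-Real.tan (α / 2) : ℝ) : ℂ) = -(S / C) by
      rw [Complex.ofReal_neg, htan], he']
    field_simp
    linear_combination 2 * S ^ 2 * C * Complex.I_sq - (C + S * Complex.I) * hpyth'
  have hne : ((1 + e) * Complex.I) ≠ 0 := by
    intro h
    have h1 : (1 : ℂ) + e = 0 := by
      rcases mul_eq_zero.mp h with h' | h'
      · exact h'
      · exact absurd h' Complex.I_ne_zero
    rw [h, mul_zero] at key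
    exact two_ne_zero (by linear_combination h1 + key : (2 : ℂ) = 0)
  set T : ℂ := ((-Real.tan (α / 2) : ℝ) : ℂ) with hT
  have hrw : φ - Complex.I • η - e • (φ + Complex.I • η)
      = (-((1 + e) * Complex.I)) • (η - T • φ) := by
    have h2 : (-((1 + e) * Complex.I)) • (η - T • φ)
        = (1 - e) • φ - ((1 + e) * Complex.I) • η := by
      rw [smul_sub, smul_smul,
        show -((1 + e) * Complex.I) * T = e - 1 by linear_combination key]
      module
    rw [h2]
    module
  have hiff : φ - Complex.I • η - e • (φ + Complex.I • η) = 0 ↔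
      η - T • φ = 0 := by
    rw [hrw, smul_eq_zero]
    simp [hne]
  constructor
  · intro h
    exact sub_eq_zero.mp (hiff.mp (sub_eq_zero.mpr h))
  · intro h
    exact sub_eq_zero.mp (hiff.mpr (sub_eq_zero.mpr h))
end

section
/- Let K be a vector space over ℂ, T : K → K a ℂ-linear map with T ∘ T = id, and α a real number. Then for all φ₁, φ₂, η₁, η₂ ∈ K, the pair of equations φ₁ - i·η₁ = e^{iα}·T(φ₂ + i·η₂) and φ₂ - i·η₂ = e^{-iα}·T(φ₁ + i·η₁) holds if and only if φ₁ = e^{iα}·T(φ₂) and η₁ = -e^{iα}·T(η₂). -/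
/-- Quasi-periodic boundary conditions: for a linear involution `T` on a complex vector
space `K` and a real phase `α`, the pair of boundary conditions
`φ₁ - i·η₁ = e^{iα}·T(φ₂ + i·η₂)` and `φ₂ - i·η₂ = e^{-iα}·T(φ₁ + i·η₁)` is equivalent
to `φ₁ = e^{iα}·T φ₂` and `η₁ = -e^{iα}·T η₂`. -/
theorem quasiperiodic_boundary_condition_iff
    {K : Type*} [AddCommGroup K] [Module ℂ K]
    (T : K →ₗ[ℂ] K) (hT : T ∘ₗ T = LinearMap.id) (α : ℝ) :
    ∀ φ₁ φ₂ η₁ η₂ : K,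
      (φ₁ - Complex.I • η₁ = Complex.exp (Complex.I * α) • T (φ₂ + Complex.I • η₂) ∧
       φ₂ - Complex.I • η₂ = Complex.exp (-(Complex.I * α)) • T (φ₁ + Complex.I • η₁)) ↔
        (φ₁ = Complex.exp (Complex.I * α) • T φ₂ ∧
         η₁ = -(Complex.exp (Complex.I * α)) • T η₂) := by
  intro φ₁ φ₂ η₁ η₂
  have hTT : ∀ x, T (T x) = x := fun x => by simpa using LinearMap.congr_fun hT x
  set e := Complex.exp (Complex.I * α) with he
  have hmul : Complex.exp (-(Complex.I * α)) * e = 1 := by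
    rw [← Complex.exp_add]; simp
  have hmul' : e * Complex.exp (-(Complex.I * α)) = 1 := by
    rw [mul_comm]; exact hmul
  constructor
  · rintro ⟨h1, h2⟩
    have h1' : φ₁ - Complex.I • η₁ = e • T φ₂ + (e * Complex.I) • T η₂ := by
      rw [h1, map_add, map_smul]; module
    have h2' : φ₁ + Complex.I • η₁ = e • T φ₂ - (e * Complex.I) • T η₂ := by
      have := congrArg (fun x => e • T x) h2
      simp only [map_sub, map_add, map_smul, smul_smul, hTT, smul_add] at this
      rw [← mul_assoc, hmul', one_mul, one_smul] at this
      rw [← this]; module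
    constructor
    · have : φ₁ = (1/2 : ℂ) • ((φ₁ - Complex.I • η₁) + (φ₁ + Complex.I • η₁)) := by module
      rw [h1', h2'] at this
      rw [this]; module
    · have hI : Complex.I • η₁ = Complex.I • ((-e) • T η₂) := by
        have : Complex.I • η₁ = (1/2 : ℂ) • ((φ₁ + Complex.I • η₁) - (φ₁ - Complex.I • η₁)) := by
          module
        rw [h1', h2'] at this
        rw [this]; module
      exact smul_right_injective K Complex.I_ne_zero hI
  · rintro ⟨h1, h2⟩
    subst h1; subst h2
    constructor
    · rw [map_add, map_smul]; module
    · have hinv : Complex.exp (-(Complex.I * ↑α)) = e⁻¹ := by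
        rw [he, ← Complex.exp_neg]
      have he0 : e ≠ 0 := Complex.exp_ne_zero _
      simp only [map_add, map_smul, hTT, smul_add, smul_smul, hinv]
      match_scalars <;> field_simp
end
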